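/- arXiv:2204.03799 — 3 statements merged into one kernel-verified Lean document; each statement's English description precedes it below -/
import Mathlib

section
/- Fix λ ∈ (-∞,1], weights β_g > 0, base levels A_g > 0, and increments α_{g,l} > 0 with α_{g,l} ≤ α_{g,l-1}. Define the marginal CES gain M(g,l) = β_g[(A_g + Σ_{s≤l} α_{g,s})^λ - (A_g + Σ_{s≤l-1} α_{g,s})^λ] for λ > 0 and its negation for λ < 0. Then for each fixed g, the sequence l ↦ M(g,l) is non-increasing (when λ ∈ (0,1]) or the sequence of absolute gains |M(g,l)| is non-increasing (when λ < 0). -/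
/-!
Both cases follow from one fact about a concave nondecreasing function `φ`: adding a smaller
increment `k ≤ h` at the later point `x + h` gains no more than adding `h` at `x`, because the
increments of a concave function shrink as the base point moves right, and `φ` is monotone in the
size of the increment. For `λ ∈ (0, 1]` take `φ x = x ^ λ`; for `λ < 0` take `φ x = -x ^ λ`,
which is concave and nondecreasing on `(0, ∞)` and whose increments are the absolute gains.
-/

open Set

section ConcaveIncrements

variable {𝕜 : Type*} [Field 𝕜] [LinearOrder 𝕜] [IsStrictOrderedRing 𝕜] {s : Set 𝕜} {f : 𝕜 → 𝕜}

theorem ConcaveOn.map_add_sub_map_le_of_le (hf : ConcaveOn 𝕜 s f) {x y k : 𝕜} (hx : x ∈ s)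
    (hyk : y + k ∈ s) (hxy : x ≤ y) (hk : 0 < k) : f (y + k) - f y ≤ f (x + k) - f x := by
  rcases hxy.eq_or_lt with rfl | hxy
  · rfl
  have hs := hf.1.ordConnected.out hx hyk
  have hy : y ∈ s := hs ⟨hxy.le, by linarith⟩
  have hxk : x + k ∈ s := hs ⟨by linarith, by linarith⟩
  have h₁ : slope f x (y + k) ≤ slope f x (x + k) :=
    hf.slope_anti hx ⟨hxk, (by linarith : x < x + k).ne'⟩ ⟨hyk, (by linarith : x < y + k).ne'⟩
      (by linarith)
  have h₂ : slope f (y + k) y ≤ slope f (y + k) x :=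
    hf.slope_anti hyk ⟨hx, (by linarith : x < y + k).ne⟩ ⟨hy, (by linarith : y < y + k).ne⟩ hxy.le
  rw [slope_comm f (y + k) x, slope_comm f (y + k) y] at h₂
  simp only [slope_def_field, add_sub_cancel_left] at h₁ h₂
  exact (div_le_div_iff_of_pos_right hk).1 (h₂.trans h₁)

theorem ConcaveOn.map_add_add_sub_map_add_le (hf : ConcaveOn 𝕜 s f) (hmono : MonotoneOn f s)
    {x h k : 𝕜} (hx : x ∈ s) (hxhk : x + h + k ∈ s) (hk : 0 < k) (hkh : k ≤ h) :
    f (x + h + k) - f (x + h) ≤ f (x + h) - f x := by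
  have hs := hf.1.ordConnected.out hx hxhk
  have hxk : x + k ∈ s := hs ⟨by linarith, by linarith⟩
  have hxh : x + h ∈ s := hs ⟨by linarith, by linarith⟩
  have hshift := hf.map_add_sub_map_le_of_le hx hxhk (by linarith : x ≤ x + h) hk
  linarith [hmono hxk hxh (by linarith)]

end ConcaveIncrements

theorem Real.convexOn_rpow_of_nonpos {p : ℝ} (hp : p ≤ 0) :
    ConvexOn ℝ (Ioi 0) fun x : ℝ ↦ x ^ p := by
  have hderiv : ∀ x ∈ Ioi (0 : ℝ), HasDerivAt (fun x : ℝ ↦ x ^ p) (p * x ^ (p - 1)) x :=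
    fun x hx ↦ hasDerivAt_rpow_const (Or.inl (ne_of_gt hx))
  refine MonotoneOn.convexOn_of_deriv (convex_Ioi 0)
    (fun x hx ↦ (hderiv x hx).continuousAt.continuousWithinAt) ?_ ?_
  · rw [interior_Ioi]
    exact fun x hx ↦ (hderiv x hx).differentiableAt.differentiableWithinAt
  · rw [interior_Ioi]
    intro x hx y hy hxy
    rw [(hderiv x hx).deriv, (hderiv y hy).deriv]
    exact mul_le_mul_of_nonpos_left (Real.rpow_le_rpow_of_nonpos hx hxy (by linarith)) hp

theorem stmt_6_general (lam β A : ℝ) (α : ℕ → ℝ) (hlam1 : lam ≤ 1)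
    (hβ : 0 < β) (hA : 0 < A) (hα : ∀ l, 0 < α l) (hmono : ∀ l, α (l + 1) ≤ α l)
    (M : ℕ → ℝ)
    (hM : ∀ l, M l =
      β * ((A + ∑ s ∈ Finset.range (l + 1), α s) ^ lam
         - (A + ∑ s ∈ Finset.range l, α s) ^ lam)) :
    ∀ l, (0 < lam → M (l + 1) ≤ M l) ∧ (lam < 0 → |M (l + 1)| ≤ |M l|) := by
  intro l
  set S : ℕ → ℝ := fun n ↦ A + ∑ s ∈ Finset.range n, α s
  have hS_pos (n : ℕ) : 0 < S n :=
    add_pos_of_pos_of_nonneg hA (Finset.sum_nonneg fun i _ ↦ (hα i).le)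
  have hS_succ (n : ℕ) : S (n + 1) = S n + α n := by
    simp only [S, Finset.sum_range_succ, add_assoc]
  have hM_succ (n : ℕ) : M n = β * ((S n + α n) ^ lam - S n ^ lam) := by
    rw [hM, ← hS_succ]
  have hkey (φ : ℝ → ℝ) (hφ : ConcaveOn ℝ (Ioi 0) φ) (hφ_mono : MonotoneOn φ (Ioi 0)) :
      β * (φ (S l + α l + α (l + 1)) - φ (S l + α l)) ≤ β * (φ (S l + α l) - φ (S l)) := by
    refine mul_le_mul_of_nonneg_left ?_ hβ.le
    refine hφ.map_add_add_sub_map_add_le hφ_mono (hS_pos l) ?_ (hα _) (hmono l)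
    rw [← hS_succ, ← hS_succ]
    exact hS_pos _
  refine ⟨fun hpos ↦ ?_, fun hneg ↦ ?_⟩
  · rw [hM_succ, hM_succ, hS_succ]
    exact hkey _ ((Real.concaveOn_rpow hpos.le hlam1).subset Ioi_subset_Ici_self (convex_Ioi 0))
      ((Real.monotoneOn_rpow_Ici_of_exponent_nonneg hpos.le).mono Ioi_subset_Ici_self)
  · have hM_abs (n : ℕ) : |M n| = β * (-(S n + α n) ^ lam - -S n ^ lam) := by
      rw [hM_succ, abs_of_nonpos]
      · ring
      refine mul_nonpos_of_nonneg_of_nonpos hβ.le (sub_nonpos.2 ?_)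
      exact Real.rpow_le_rpow_of_nonpos (hS_pos n) (by linarith [hα n]) hneg.le
    rw [hM_abs, hM_abs, hS_succ]
    exact hkey _ (Real.convexOn_rpow_of_nonpos hneg.le).neg
      (Real.antitoneOn_rpow_Ioi_of_exponent_nonpos hneg.le).neg

/-- Monotone marginal CES gains along successive increments to a single group:
with M(l) = β[(A + Σ_{s≤l} α_s)^λ - (A + Σ_{s≤l-1} α_s)^λ], the gains are non-increasing
for λ ∈ (0,1], and the absolute gains are non-increasing for λ < 0. -/
theorem stmt_6 (lam β A : ℝ) (α : ℕ → ℝ) (hlam1 : lam ≤ 1) (hlam0 : lam ≠ 0)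
    (hβ : 0 < β) (hA : 0 < A) (hα : ∀ l, 0 < α l) (hmono : ∀ l, α (l + 1) ≤ α l)
    (M : ℕ → ℝ)
    (hM : ∀ l, M l =
      β * ((A + ∑ s ∈ Finset.range (l + 1), α s) ^ lam
         - (A + ∑ s ∈ Finset.range l, α s) ^ lam)) :
    ∀ l, (0 < lam → M (l + 1) ≤ M l) ∧ (lam < 0 → |M (l + 1)| ≤ |M l|) :=
  stmt_6_general lam β A α hlam1 hβ hA hα hmono M hM
end

section
/- As λ → -∞, the CES comparison degenerates to a leximin/levels comparison: for A₁, A₂ > 0 with A₁ < A₂ and any increments α₁, α₂ > 0, there exists λ̄ < 0 such that for all λ < λ̄, β((A₁+α₁)^λ - A₁^λ) ≤ β((A₂+α₂)^λ - A₂^λ) holds for any fixed equal weights β > 0; i.e., the group with the lower base level A₁ is ranked first in the allocation queue. -/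
/-!
Since `(A₂ + α₂) ^ λ > 0`, it suffices that `(A₁ + α₁) ^ λ + A₂ ^ λ ≤ A₁ ^ λ`. Dividing by
`A₁ ^ λ`, this says `((A₁ + α₁) / A₁) ^ λ + (A₂ / A₁) ^ λ ≤ 1`, and both terms tend to `0` as
`λ → -∞` because their bases exceed `1`.
-/

open Filter Topology

theorem Filter.Eventually.exists_lt_forall_lt_of_atBot {α : Type*} [LinearOrder α] [NoMinOrder α]
    {p : α → Prop} (h : ∀ᶠ x in atBot, p x) (c : α) : ∃ a < c, ∀ x < a, p x := by
  have : Nonempty α := ⟨c⟩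
  obtain ⟨a, ha⟩ := eventually_atBot.mp (h.and (eventually_lt_atBot c))
  exact ⟨a, (ha a le_rfl).2, fun x hx => (ha x hx.le).1⟩

theorem Real.eventually_rpow_add_rpow_le_rpow_atBot {a b c : ℝ} (ha : 0 < a) (hab : a < b)
    (hac : a < c) : ∀ᶠ y : ℝ in atBot, b ^ y + c ^ y ≤ a ^ y := by
  have hlim : Tendsto (fun y : ℝ => (b / a) ^ y + (c / a) ^ y) atBot (𝓝 0) := by
    simpa using (tendsto_rpow_atBot_of_base_gt_one _ ((one_lt_div ha).2 hab)).add
      (tendsto_rpow_atBot_of_base_gt_one _ ((one_lt_div ha).2 hac))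
  refine (hlim.eventually (ge_mem_nhds zero_lt_one)).mono fun y hy => ?_
  rw [Real.div_rpow (hab.le.trans' ha.le) ha.le, Real.div_rpow (hac.le.trans' ha.le) ha.le,
    ← add_div, div_le_one (Real.rpow_pos_of_pos ha y)] at hy
  exact hy

/-- As λ → -∞ the CES comparison degenerates to a levels comparison: for sufficiently
negative λ, the group with the lower base level A₁ has the smaller (more negative)
marginal gain, hence is ranked first in the allocation queue. -/
theorem stmt_11 (A₁ A₂ α₁ α₂ β : ℝ) (hA₁ : 0 < A₁) (hA₁₂ : A₁ < A₂)
    (hα₁ : 0 < α₁) (hα₂ : 0 < α₂) (hβ : 0 < β) :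
    ∃ lamBar < (0 : ℝ), ∀ lam < lamBar,
      β * ((A₁ + α₁) ^ lam - A₁ ^ lam) ≤ β * ((A₂ + α₂) ^ lam - A₂ ^ lam) := by
  obtain ⟨lamBar, hneg, hlevels⟩ := (Real.eventually_rpow_add_rpow_le_rpow_atBot hA₁
    (lt_add_of_pos_right A₁ hα₁) hA₁₂).exists_lt_forall_lt_of_atBot 0
  refine ⟨lamBar, hneg, fun lam hlam => mul_le_mul_of_nonneg_left ?_ hβ.le⟩
  have hpos : 0 < (A₂ + α₂) ^ lam := Real.rpow_pos_of_pos (by linarith) lam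
  linarith [hlevels lam hlam]
end

section
/- (Optimality of the queue solution for general λ) Let λ ∈ (-∞,1], λ ≠ 0, weights β_g > 0, A_g > 0, and increments α_{g,l} > 0 non-increasing in l with caps D̄_g, and assume all weighted gains are distinct. Then the allocation D*_g(W) = Σ_{l=1}^{D̄_g} 1{Q_{g,l} ≤ W}, with Q as in the queue definition, maximizes (Σ_g β_g (A_g + Σ_{l≤D_g} α_{g,l})^λ)^{1/λ} over all integer allocations with 0 ≤ D_g ≤ D̄_g and Σ_g D_g ≤ W. -/
/-!
Multiplying by `sign λ` turns the CES sum into `Σ_g β_g f(A_g + Σ_{l < D_g} α_{g,l})` with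
`f t = sign λ · t ^ λ`, which for `λ ≤ 1` is increasing and concave on `(0, ∞)`. Telescoping
writes it as a constant plus the sum of the signed gains `sign λ · gain_{g,l}` of the funded
increments; these are nonnegative, and within a group they decrease in `l` because `f` is concave
and the increments `α_{g,l}` decrease. The increments funded by a feasible allocation are at most
`W` of them, so their total is at most that of the `W` increments of largest signed gain (an
exchange argument). Those are the increments of queue rank at most `W`, and since signed gains
decrease within a group they form a prefix of every group: this is the queue allocation.
Finally `x ↦ x ^ (1 / λ)` is increasing for `λ > 0` and decreasing for `λ < 0`, which undoes
the factor `sign λ`.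
-/

open Finset Real

lemma hasDerivAt_sign_mul_rpow (lam : ℝ) {t : ℝ} (ht : 0 < t) :
    HasDerivAt (fun t : ℝ => sign lam * t ^ lam) (sign lam * lam * t ^ (lam - 1)) t := by
  simpa only [mul_assoc] using (hasDerivAt_rpow_const (Or.inl ht.ne')).const_mul (sign lam)

lemma monotoneOn_sign_mul_rpow (lam : ℝ) :
    MonotoneOn (fun t : ℝ => sign lam * t ^ lam) (Set.Ioi 0) := by
  refine monotoneOn_of_hasDerivWithinAt_nonneg (convex_Ioi 0)
    (fun t ht => (hasDerivAt_sign_mul_rpow lam ht).continuousAt.continuousWithinAt)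
    (fun t ht => (hasDerivAt_sign_mul_rpow lam ?_).hasDerivWithinAt) fun t ht => ?_
  · exact interior_subset ht
  · rw [interior_Ioi] at ht
    exact mul_nonneg (sign_mul_nonneg lam) (rpow_nonneg ht.le _)

lemma concaveOn_sign_mul_rpow {lam : ℝ} (hlam : lam ≤ 1) :
    ConcaveOn ℝ (Set.Ioi 0) (fun t : ℝ => sign lam * t ^ lam) := by
  refine AntitoneOn.concaveOn_of_deriv (convex_Ioi 0)
    (fun t ht => (hasDerivAt_sign_mul_rpow lam ht).continuousAt.continuousWithinAt)
    (fun t ht => (hasDerivAt_sign_mul_rpow lam ?_).differentiableAt.differentiableWithinAt)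
    fun t ht u hu htu => ?_
  · exact interior_subset ht
  rw [interior_Ioi] at ht hu
  rw [(hasDerivAt_sign_mul_rpow lam ht).deriv, (hasDerivAt_sign_mul_rpow lam hu).deriv]
  exact mul_le_mul_of_nonneg_left (rpow_le_rpow_of_nonpos ht htu (by linarith))
    (sign_mul_nonneg lam)

lemma ConcaveOn.sub_le_sub_of_le {f : ℝ → ℝ} {x a b : ℝ} (hf : ConcaveOn ℝ (Set.Ici x) f)
    (hmono : MonotoneOn f (Set.Ici x)) (hb : 0 ≤ b) (hba : b ≤ a) :
    f (x + a + b) - f (x + a) ≤ f (x + a) - f x := by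
  -- concavity at the midpoint `x + a` of `x` and `x + 2a`, then monotonicity up to `x + 2a`
  have hmem : ∀ c, 0 ≤ c → x + c ∈ Set.Ici x := fun c hc => by simpa using hc
  have hmid := hf.2 Set.self_mem_Ici (hmem (a + a) (by linarith))
    (show (0 : ℝ) ≤ 1 / 2 by norm_num) (show (0 : ℝ) ≤ 1 / 2 by norm_num) (by norm_num)
  rw [show (1 / 2 : ℝ) • x + (1 / 2 : ℝ) • (x + (a + a)) = x + a by simp only [smul_eq_mul]; ring,
    smul_eq_mul, smul_eq_mul] at hmid
  have hle : f (x + a + b) ≤ f (x + (a + a)) :=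
    hmono (by simpa [add_assoc] using hmem (a + b) (by linarith)) (hmem _ (by linarith))
      (by linarith)
  linarith

lemma antitone_sub_of_concaveOn {f : ℝ → ℝ} {c : ℝ} {a : ℕ → ℝ} (hf : ConcaveOn ℝ (Set.Ici c) f)
    (hmono : MonotoneOn f (Set.Ici c)) (ha₀ : ∀ l, 0 ≤ a l) (ha : Antitone a) :
    Antitone fun l => f (c + ∑ s ∈ range (l + 1), a s) - f (c + ∑ s ∈ range l, a s) := by
  refine antitone_nat_of_succ_le fun l => ?_
  have hx : Set.Ici (c + ∑ s ∈ range l, a s) ⊆ Set.Ici c :=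
    Set.Ici_subset_Ici.2 (le_add_of_nonneg_right (sum_nonneg fun s _ => ha₀ s))
  simp only [sum_range_succ, ← add_assoc]
  exact (hf.subset hx (convex_Ici _)).sub_le_sub_of_le (hmono.mono hx) (ha₀ _) (ha l.le_succ)

lemma rpow_one_div_le_of_sign_mul_le {x y lam : ℝ} (hx : 0 ≤ x) (hy : 0 < y)
    (h : sign lam * x ≤ sign lam * y) : x ^ (1 / lam) ≤ y ^ (1 / lam) := by
  rcases lt_trichotomy lam 0 with hlam | rfl | hlam
  · rw [sign_of_neg hlam] at h
    exact rpow_le_rpow_of_nonpos hy (by linarith) (by simp [hlam.le])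
  · simp
  · rw [sign_of_pos hlam] at h
    exact rpow_le_rpow hx (by linarith) (by positivity)

lemma sum_mul_eq_sum_mul_add_sum_sum_sub {ι R : Type*} [Fintype ι] [CommRing R] (β : ι → R)
    (F : ι → ℕ → R) (D : ι → ℕ) :
    ∑ g, β g * F g (D g)
      = ∑ g, β g * F g 0 + ∑ g, ∑ l ∈ range (D g), β g * (F g (l + 1) - F g l) := by
  rw [← sum_add_distrib]
  refine sum_congr rfl fun g _ => ?_
  rw [← mul_sum, sum_range_sub]
  ring

-- The queue key `sign λ · gain_{g,l}`; increments are indexed from `0`.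
noncomputable def signedGain (lam β A : ℝ) (α : ℕ → ℝ) (l : ℕ) : ℝ :=
  β * (sign lam * (A + ∑ s ∈ range (l + 1), α s) ^ lam - sign lam * (A + ∑ s ∈ range l, α s) ^ lam)

section SignedGain

variable {lam β A : ℝ} {α : ℕ → ℝ}

lemma signedGain_nonneg (hβ : 0 ≤ β) (hA : 0 < A) (hα : ∀ l, 0 ≤ α l) (l : ℕ) :
    0 ≤ signedGain lam β A α l := by
  have hpos : 0 < A + ∑ s ∈ range l, α s :=
    add_pos_of_pos_of_nonneg hA (sum_nonneg fun s _ => hα s)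
  have hle : A + ∑ s ∈ range l, α s ≤ A + ∑ s ∈ range (l + 1), α s := by
    rw [sum_range_succ]
    linarith [hα l]
  exact mul_nonneg hβ
    (sub_nonneg.2 (monotoneOn_sign_mul_rpow lam hpos (hpos.trans_le hle) hle))

lemma antitone_signedGain (hlam : lam ≤ 1) (hβ : 0 ≤ β) (hA : 0 < A) (hα : ∀ l, 0 ≤ α l)
    (hanti : Antitone α) : Antitone (signedGain lam β A α) := by
  have hsub : Set.Ici A ⊆ Set.Ioi 0 := Set.Ici_subset_Ioi.2 hA
  exact (antitone_sub_of_concaveOn ((concaveOn_sign_mul_rpow hlam).subset hsub (convex_Ici A))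
    ((monotoneOn_sign_mul_rpow lam).mono hsub) hα hanti).const_mul hβ

end SignedGain

lemma sign_mul_sum_rpow_eq {ι : Type*} [Fintype ι] (lam : ℝ) (β A : ι → ℝ) (α : ι → ℕ → ℝ)
    (D : ι → ℕ) :
    sign lam * ∑ g, β g * (A g + ∑ l ∈ range (D g), α g l) ^ lam
      = ∑ g, β g * (sign lam * A g ^ lam)
        + ∑ g, ∑ l ∈ range (D g), signedGain lam (β g) (A g) (α g) l := by
  have := sum_mul_eq_sum_mul_add_sum_sum_sub β
    (fun g n => sign lam * (A g + ∑ l ∈ range n, α g l) ^ lam) D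
  simp only [range_zero, sum_empty, add_zero] at this
  rw [mul_sum]
  exact (sum_congr rfl fun g _ => by ring).trans this

lemma Finset.sum_le_sum_of_card_le_of_forall_sdiff_le {ι M : Type*} [DecidableEq ι]
    [AddCommMonoid M] [LinearOrder M] [IsOrderedAddMonoid M] {S G : Finset ι} {K : ι → M}
    (hK₀ : ∀ p ∈ G, 0 ≤ K p) (hcard : #S ≤ #G) (hle : ∀ q ∈ S \ G, ∀ p ∈ G \ S, K q ≤ K p) :
    ∑ p ∈ S, K p ≤ ∑ p ∈ G, K p := by
  rw [← sum_inter_add_sum_sdiff S G, ← sum_inter_add_sum_sdiff G S, inter_comm]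
  refine add_le_add_right ?_ _
  have hcard' : #(S \ G) ≤ #(G \ S) := card_sdiff_le_card_sdiff_iff.2 hcard
  obtain hSG | hSG := (S \ G).eq_empty_or_nonempty
  · rw [hSG, sum_empty]
    exact sum_nonneg fun p hp => hK₀ p (mem_sdiff.1 hp).1
  obtain ⟨p₀, hp₀, hmin⟩ := exists_min_image (G \ S) K (card_pos.1 (hSG.card_pos.trans_le hcard'))
  calc ∑ p ∈ S \ G, K p ≤ #(S \ G) • K p₀ := sum_le_card_nsmul _ _ _ fun q hq => hle q hq p₀ hp₀
    _ ≤ #(G \ S) • K p₀ := nsmul_le_nsmul_left (hK₀ p₀ (mem_sdiff.1 hp₀).1) hcard'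
    _ ≤ ∑ p ∈ G \ S, K p := card_nsmul_le_sum _ _ _ hmin

section Rank

variable {α M : Type*} [LinearOrder M] {T : Finset α} {K : α → M} {p q : α} {W : ℕ}

-- `p` itself is counted, so ranks start at `1`.
def keyRank (T : Finset α) (K : α → M) (p : α) : ℕ := #{q ∈ T | K p ≤ K q}

def topSet (T : Finset α) (K : α → M) (W : ℕ) : Finset α := {p ∈ T | keyRank T K p ≤ W}

lemma keyRank_le_keyRank (h : K p ≤ K q) : keyRank T K q ≤ keyRank T K p :=
  card_le_card <| monotone_filter_right _ fun _ _ => h.trans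

lemma keyRank_lt_keyRank (hp : p ∈ T) (h : K p < K q) : keyRank T K q < keyRank T K p :=
  card_lt_card <| (ssubset_iff_of_subset (monotone_filter_right _ fun _ _ => h.le.trans)).2
    ⟨p, mem_filter.2 ⟨hp, le_rfl⟩, fun hp' => (mem_filter.1 hp').2.not_gt h⟩

lemma injOn_keyRank (hK : Set.InjOn K T) : Set.InjOn (keyRank T K) T := by
  intro p hp q hq h
  by_contra hpq
  obtain hlt | hlt := lt_or_gt_of_ne (hK.ne hp hq hpq)
  · exact (keyRank_lt_keyRank hp hlt).ne' h
  · exact (keyRank_lt_keyRank hq hlt).ne h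

lemma image_keyRank (hK : Set.InjOn K T) : T.image (keyRank T K) = Icc 1 #T := by
  refine eq_of_subset_of_card_le (fun r hr => ?_) ?_
  · obtain ⟨p, hp, rfl⟩ := mem_image.1 hr
    exact mem_Icc.2 ⟨card_pos.2 ⟨p, mem_filter.2 ⟨hp, le_rfl⟩⟩, card_filter_le _ _⟩
  · rw [card_image_of_injOn (injOn_keyRank hK), Nat.card_Icc, Nat.add_sub_cancel]

lemma card_topSet [DecidableEq α] (hK : Set.InjOn K T) : #(topSet T K W) = min #T W := by
  have h := filter_image (f := keyRank T K) (s := T) (p := (· ≤ W))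
  rw [image_keyRank hK] at h
  rw [topSet, ← card_image_of_injOn ((injOn_keyRank hK).mono (filter_subset _ _)), ← h]
  have : {r ∈ Icc 1 #T | r ≤ W} = Icc 1 (min #T W) := by
    ext
    simp only [mem_filter, mem_Icc]
    omega
  rw [this, Nat.card_Icc, Nat.add_sub_cancel]

lemma mem_topSet_of_le (hp : p ∈ topSet T K W) (hq : q ∈ T) (h : K p ≤ K q) :
    q ∈ topSet T K W :=
  mem_filter.2 ⟨hq, (keyRank_le_keyRank h).trans (mem_filter.1 hp).2⟩

lemma sum_le_sum_topSet [DecidableEq α] [AddCommMonoid M] [IsOrderedAddMonoid M] {S : Finset α}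
    (hK : Set.InjOn K T) (hK₀ : ∀ p ∈ T, 0 ≤ K p) (hS : S ⊆ T) (hSW : #S ≤ W) :
    ∑ p ∈ S, K p ≤ ∑ p ∈ topSet T K W, K p := by
  refine sum_le_sum_of_card_le_of_forall_sdiff_le (fun p hp => hK₀ p (filter_subset _ _ hp))
    (card_topSet hK ▸ le_min (card_le_card hS) hSW) fun q hq p hp => ?_
  rw [mem_sdiff] at hq hp
  exact le_of_not_gt fun h => hq.2 (mem_topSet_of_le hp.1 (hS hq.1) h.le)

end Rank

lemma filter_range_eq_range_card {P : ℕ → Prop} [DecidablePred P] (hP : Antitone P) (n : ℕ) :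
    {l ∈ range n | P l} = range #{l ∈ range n | P l} := by
  induction n with
  | zero => simp
  | succ n ih =>
    by_cases h : P n
    · rw [filter_true_of_mem fun l hl => hP (mem_range_succ_iff.1 hl) h, card_range]
    · rwa [range_add_one, filter_insert, if_neg h]

section Queue

variable {ι M : Type*} [Fintype ι]

-- `⟨g, l⟩` is the `(l + 1)`-st increment of group `g`.
def increments (D : ι → ℕ) : Finset (Σ _ : ι, ℕ) := univ.sigma fun g => range (D g)

lemma mem_increments {D : ι → ℕ} {p : Σ _ : ι, ℕ} : p ∈ increments D ↔ p.2 < D p.1 := by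
  simp [increments]

lemma card_increments (D : ι → ℕ) : #(increments D) = ∑ g, D g := by
  simp [increments]

lemma increments_mono {D E : ι → ℕ} (h : ∀ g, D g ≤ E g) : increments D ⊆ increments E :=
  sigma_mono subset_rfl fun g => range_subset_range.2 (h g)

lemma sum_increments [AddCommMonoid M] (key : ι → ℕ → M) (D : ι → ℕ) :
    ∑ p ∈ increments D, key p.1 p.2 = ∑ g, ∑ l ∈ range (D g), key g l :=
  sum_sigma _ _ _

lemma keyRank_increments [LinearOrder M] (Dbar : ι → ℕ) (key : ι → ℕ → M) (g : ι) (l : ℕ) :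
    keyRank (increments Dbar) (fun p => key p.1 p.2) ⟨g, l⟩
      = ∑ j, #{k ∈ range (Dbar j) | key g l ≤ key j k} := by
  rw [keyRank, increments, filter_sigma, card_sigma]

def queueAlloc [LinearOrder M] (Dbar : ι → ℕ) (key : ι → ℕ → M) (W : ℕ) (g : ι) : ℕ :=
  #{l ∈ range (Dbar g) | keyRank (increments Dbar) (fun p => key p.1 p.2) ⟨g, l⟩ ≤ W}

lemma card_topSet_increments [LinearOrder M] (Dbar : ι → ℕ) (key : ι → ℕ → M) (W : ℕ) :
    #(topSet (increments Dbar) (fun p => key p.1 p.2) W) = ∑ g, queueAlloc Dbar key W g := by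
  rw [topSet, increments, filter_sigma, card_sigma]
  rfl

lemma topSet_increments [LinearOrder M] {Dbar : ι → ℕ} {key : ι → ℕ → M}
    (hkey : ∀ g, Antitone (key g)) (W : ℕ) :
    topSet (increments Dbar) (fun p => key p.1 p.2) W = increments (queueAlloc Dbar key W) := by
  change filter _ (univ.sigma fun g => range (Dbar g)) = _
  rw [filter_sigma]
  refine congrArg _ (funext fun g => ?_)
  exact filter_range_eq_range_card (fun a b hab hb =>
    (keyRank_le_keyRank (K := fun p : Σ _ : ι, ℕ => key p.1 p.2) (hkey g hab)).trans hb) (Dbar g)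

lemma sum_queueAlloc_le [LinearOrder M] {Dbar : ι → ℕ} {key : ι → ℕ → M}
    (hK : Set.InjOn (fun p : Σ _ : ι, ℕ => key p.1 p.2) (increments Dbar)) (W : ℕ) :
    ∑ g, queueAlloc Dbar key W g ≤ W := by
  classical
  rw [← card_topSet_increments, card_topSet hK]
  exact min_le_right _ _

lemma sum_le_sum_queueAlloc [DecidableEq ι] [AddCommMonoid M] [LinearOrder M]
    [IsOrderedAddMonoid M] {Dbar : ι → ℕ} {key : ι → ℕ → M} (hkey : ∀ g, Antitone (key g))
    (hkey₀ : ∀ g l, 0 ≤ key g l) (hK : Set.InjOn (fun p : Σ _ : ι, ℕ => key p.1 p.2) (increments Dbar))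
    {D : ι → ℕ} {W : ℕ} (hD : ∀ g, D g ≤ Dbar g) (hDW : ∑ g, D g ≤ W) :
    ∑ g, ∑ l ∈ range (D g), key g l ≤ ∑ g, ∑ l ∈ range (queueAlloc Dbar key W g), key g l := by
  rw [← sum_increments, ← sum_increments, ← topSet_increments hkey]
  exact sum_le_sum_topSet hK (fun p _ => hkey₀ p.1 p.2) (increments_mono hD)
    ((card_increments D).trans_le hDW)

end Queue

lemma ite_pos_eq_sign_mul {lam : ℝ} (hlam : lam ≠ 0) (a : ℝ) :
    (if 0 < lam then a else -a) = sign lam * a := by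
  obtain hlam | hlam := hlam.lt_or_gt
  · rw [if_neg hlam.not_gt, sign_of_neg hlam, neg_one_mul]
  · rw [if_pos hlam, sign_of_pos hlam, one_mul]

/-- Theorem 1 of the paper: the queue allocation D*_g(W) = Σ_l 1{Q_{g,l} ≤ W}, where Q ranks
all increments by descending weighted gain for λ ∈ (0,1] and ascending weighted gain for
λ < 0 (no ties), is feasible and maximizes the CES objective
(Σ_g β_g (A_g + Σ_{l≤D_g} α_{g,l})^λ)^{1/λ} subject to 0 ≤ D_g ≤ D̄_g and Σ_g D_g ≤ W. -/
theorem stmt_19 (N : ℕ) (β A : Fin N → ℝ) (α : Fin N → ℕ → ℝ) (Dbar : Fin N → ℕ)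
    (lam : ℝ) (W : ℕ)
    (hβ : ∀ g, 0 < β g) (hA : ∀ g, 0 < A g) (hα : ∀ g l, 0 < α g l)
    (hmono : ∀ g l, α g (l + 1) ≤ α g l) (hlam1 : lam ≤ 1) (hlam0 : lam ≠ 0)
    (wgain : Fin N → ℕ → ℝ)
    (hwgain : ∀ g l, wgain g l = β g *
      ((A g + ∑ s ∈ Finset.range (l + 1), α g s) ^ lam
        - (A g + ∑ s ∈ Finset.range l, α g s) ^ lam))
    (hnoties : ∀ g l j k, l < Dbar g → k < Dbar j → (g, l) ≠ (j, k) →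
      wgain g l ≠ wgain j k)
    (key : Fin N → ℕ → ℝ)
    (hkey : ∀ g l, key g l = if 0 < lam then wgain g l else -wgain g l)
    (Q : Fin N → ℕ → ℕ)
    (hQ : ∀ g l, Q g l = ∑ j,
      ((Finset.range (Dbar j)).filter (fun k => key g l ≤ key j k)).card)
    (Dstar : Fin N → ℕ)
    (hDstar : ∀ g, Dstar g = ((Finset.range (Dbar g)).filter (fun l => Q g l ≤ W)).card) :
    (∑ g, Dstar g ≤ W) ∧
    ∀ D : Fin N → ℕ, (∀ g, D g ≤ Dbar g) → ∑ g, D g ≤ W →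
      (∑ g, β g * (A g + ∑ l ∈ Finset.range (D g), α g l) ^ lam) ^ (1 / lam)
        ≤ (∑ g, β g * (A g + ∑ l ∈ Finset.range (Dstar g), α g l) ^ lam) ^ (1 / lam) := by
  have hinj : Set.InjOn (fun p : Σ _ : Fin N, ℕ => key p.1 p.2) (increments Dbar) := by
    rintro ⟨g, l⟩ hp ⟨j, k⟩ hq h
    rw [mem_coe, mem_increments] at hp hq
    by_contra hne
    refine hnoties g l j k hp hq (fun h' => hne ?_) ?_
    · obtain ⟨rfl, rfl⟩ := Prod.mk.inj h'
      rfl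
    · simp only [hkey, ite_pos_eq_sign_mul hlam0] at h
      exact mul_left_cancel₀ (fun h0 => hlam0 (sign_eq_zero_iff.1 h0)) h
  obtain rfl : Dstar = queueAlloc Dbar key W := funext fun g => by
    simp only [hDstar, hQ, queueAlloc, keyRank_increments]
  obtain rfl : key = fun g => signedGain lam (β g) (A g) (α g) := funext₂ fun g l => by
    rw [hkey, ite_pos_eq_sign_mul hlam0, hwgain, signedGain]
    ring
  refine ⟨sum_queueAlloc_le hinj W, fun D hD hDW => ?_⟩
  have hterm : ∀ g n, 0 < β g * (A g + ∑ l ∈ range n, α g l) ^ lam := fun g n =>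
    mul_pos (hβ g) (rpow_pos_of_pos
      (add_pos_of_pos_of_nonneg (hA g) (sum_nonneg fun l _ => (hα g l).le)) _)
  obtain hN | hN := isEmpty_or_nonempty (Fin N)
  · simp [univ_eq_empty]
  refine rpow_one_div_le_of_sign_mul_le (sum_nonneg fun g _ => (hterm g _).le)
    (sum_pos (fun g _ => hterm g _) univ_nonempty) ?_
  rw [sign_mul_sum_rpow_eq, sign_mul_sum_rpow_eq]
  exact add_le_add_right (sum_le_sum_queueAlloc
    (fun g => antitone_signedGain hlam1 (hβ g).le (hA g) (fun l => (hα g l).le)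
      (antitone_nat_of_succ_le (hmono g)))
    (fun g => signedGain_nonneg (hβ g).le (hA g) fun l => (hα g l).le) hinj hD hDW) _
end
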